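/- arXiv:2205.09467 — 7 statements merged into one kernel-verified Lean document; each statement's English description precedes it below -/
import Mathlib

section
/- Let φ: ]a,∞[ → ℝ be smooth and strictly monotone, and let u: I → ]a,∞[ be a C² solution of the ODE u''(x) = φ'(u(x))(1 + u'(x)²). Then the quantity e^{φ(u(x))} / √(1 + u'(x)²) is constant along the solution, i.e. its derivative vanishes on I. -/
open Real Set

/-- First integral of the `[φ,e₃]`-catenary equation: along any C² solution of
`u'' = φ'(u)(1 + u'²)` with `φ` smooth and strictly monotone on `]a,∞[`, the quantity
`e^{φ(u)} / √(1 + u'²)` is constant, i.e. its derivative vanishes on `I`. -/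
theorem stmt0 (a : ℝ) (φ u u' : ℝ → ℝ) (I : Set ℝ)
    (hφ : ContDiff ℝ (⊤ : ℕ∞) φ)
    (hmono : StrictMonoOn φ (Ioi a) ∨ StrictAntiOn φ (Ioi a))
    (hmem : ∀ x ∈ I, u x ∈ Ioi a)
    (hu : ∀ x ∈ I, HasDerivAt u (u' x) x)
    (hu' : ∀ x ∈ I, HasDerivAt u' (deriv φ (u x) * (1 + (u' x) ^ 2)) x) :
    ∀ x ∈ I, HasDerivAt (fun t => Real.exp (φ (u t)) / Real.sqrt (1 + (u' t) ^ 2)) 0 x := by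
  intro x hx
  have hpos : (0 : ℝ) < 1 + (u' x) ^ 2 := by positivity
  have hsq : 0 < Real.sqrt (1 + (u' x) ^ 2) := Real.sqrt_pos.mpr hpos
  -- derivative of φ ∘ u
  have hφd : HasDerivAt φ (deriv φ (u x)) (u x) :=
    (hφ.differentiable (by simp) (u x)).hasDerivAt
  have h1 : HasDerivAt (fun t => Real.exp (φ (u t)))
      (Real.exp (φ (u x)) * (deriv φ (u x) * u' x)) x :=
    ((hφd.comp x (hu x hx)).exp)
  have h2 : HasDerivAt (fun t => Real.sqrt (1 + (u' t) ^ 2))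
      ((u' x * (deriv φ (u x) * (1 + (u' x) ^ 2))) / Real.sqrt (1 + (u' x) ^ 2)) x := by
    have hinner : HasDerivAt (fun t => 1 + (u' t) ^ 2)
        (2 * u' x * (deriv φ (u x) * (1 + (u' x) ^ 2))) x := by
      have := ((hu' x hx).pow 2).const_add 1
      refine this.congr_deriv (Eq.symm ?_)
      ring
    have := (Real.hasDerivAt_sqrt (ne_of_gt hpos)).comp x hinner
    refine this.congr_deriv (Eq.symm ?_)
    field_simp
  have hsqne : Real.sqrt (1 + (u' x) ^ 2) ≠ 0 := ne_of_gt hsq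
  have := h1.div h2 hsqne
  refine this.congr_deriv (Eq.symm ?_)
  have hsqsq : Real.sqrt (1 + (u' x) ^ 2) ^ 2 = 1 + (u' x) ^ 2 :=
    Real.sq_sqrt hpos.le
  field_simp
  ring_nf
  rw [hsqsq]
  ring
end

section
/- Let φ: ]a,∞[ → ℝ be smooth with φ' > 0 everywhere, and let u: I → ]a,∞[ solve u'' = φ'(u)(1 + u'²) with u(0) = u₀ and u'(0) = 0. Then u is strictly convex on I, is even (u(-x) = u(x) for x, -x ∈ I), and attains a strict global minimum at x = 0. -/
open Real Set

/-- For smooth `φ` with `φ' > 0` on `]a,∞[`, a solution of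
`u'' = φ'(u)(1 + u'²)` with `u(0) = u₀`, `u'(0) = 0` is strictly convex, even,
and attains a strict global minimum at `x = 0`. -/
theorem stmt1 (a u₀ : ℝ) (φ u u' : ℝ → ℝ) (I : Set ℝ)
    (hI : Convex ℝ I) (h0 : (0 : ℝ) ∈ I)
    (hφ : ContDiff ℝ (⊤ : ℕ∞) φ)
    (hφ' : ∀ y ∈ Ioi a, 0 < deriv φ y)
    (hmem : ∀ x ∈ I, u x ∈ Ioi a)
    (hu : ∀ x ∈ I, HasDerivAt u (u' x) x)
    (hu' : ∀ x ∈ I, HasDerivAt u' (deriv φ (u x) * (1 + (u' x) ^ 2)) x)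
    (hinit : u 0 = u₀) (hinit' : u' 0 = 0) :
    StrictConvexOn ℝ I u ∧ (∀ x, x ∈ I → -x ∈ I → u (-x) = u x) ∧
      (∀ x ∈ I, x ≠ 0 → u 0 < u x) := by
  have contu : ContinuousOn u I := fun x hx => (hu x hx).continuousAt.continuousWithinAt
  have contu' : ContinuousOn u' I := fun x hx => (hu' x hx).continuousAt.continuousWithinAt
  have hpos : ∀ x ∈ I, 0 < deriv φ (u x) * (1 + (u' x) ^ 2) := fun x hx =>
    mul_pos (hφ' _ (hmem x hx)) (by positivity)
  -- u' is strictly monotone on I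
  have hmono : StrictMonoOn u' I := by
    apply strictMonoOn_of_deriv_pos hI contu'
    intro x hx
    rw [(hu' x (interior_subset hx)).deriv]
    exact hpos x (interior_subset hx)
  -- strict convexity
  have hconv : StrictConvexOn ℝ I u := by
    apply StrictMonoOn.strictConvexOn_of_deriv hI contu
    intro x hx y hy hxy
    rw [(hu x (interior_subset hx)).deriv, (hu y (interior_subset hy)).deriv]
    exact hmono (interior_subset hx) (interior_subset hy) hxy
  -- strict minimum at 0
  have hmin : ∀ x ∈ I, x ≠ 0 → u 0 < u x := by
    intro x hx hne
    rcases hne.lt_or_gt with hlt | hlt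
    · have hsub : Icc x 0 ⊆ I := hI.ordConnected.out hx h0
      have : StrictAntiOn u (Icc x 0) := by
        apply strictAntiOn_of_deriv_neg (convex_Icc _ _) (contu.mono hsub)
        intro t ht
        rw [interior_Icc] at ht
        have htI : t ∈ I := hsub (Ioo_subset_Icc_self ht)
        rw [(hu t htI).deriv]
        have := hmono htI h0 ht.2
        rwa [hinit'] at this
      exact this (left_mem_Icc.2 hlt.le) (right_mem_Icc.2 hlt.le) hlt
    · have hsub : Icc 0 x ⊆ I := hI.ordConnected.out h0 hx
      have : StrictMonoOn u (Icc 0 x) := by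
        apply strictMonoOn_of_deriv_pos (convex_Icc _ _) (contu.mono hsub)
        intro t ht
        rw [interior_Icc] at ht
        have htI : t ∈ I := hsub (Ioo_subset_Icc_self ht)
        rw [(hu t htI).deriv]
        have := hmono h0 htI ht.1
        rwa [hinit'] at this
      exact this (left_mem_Icc.2 hlt.le) (right_mem_Icc.2 hlt.le) hlt
  -- evenness via uniqueness of ODE solutions (Grönwall)
  have key : ∀ x, 0 ≤ x → x ∈ I → -x ∈ I → u (-x) = u x := by
    intro x hx0 hxI hxI'
    set ψ := deriv φ with hψdef
    have hψ : ContDiff ℝ 1 ψ :=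
      ((contDiff_infty_iff_deriv.mp (hφ.of_le (by simp))).2).of_le (by exact_mod_cast le_top)
    set V : ℝ × ℝ → ℝ × ℝ := fun p => (p.2, ψ p.1 * (1 + p.2 ^ 2)) with hVdef
    have hVc : ContDiff ℝ 1 V :=
      contDiff_snd.prodMk ((hψ.comp contDiff_fst).mul
        (contDiff_const.add (contDiff_snd.pow 2)))
    have hsub : Icc (-x) x ⊆ I := hI.ordConnected.out hxI' hxI
    have hne : (Icc (-x) x).Nonempty := ⟨0, by constructor <;> linarith⟩
    obtain ⟨t₀, ht₀, hR⟩ := isCompact_Icc.exists_isMaxOn hne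
      (((contu.mono hsub).prodMk (contu'.mono hsub)).norm)
    set R := ‖(u t₀, u' t₀)‖ with hRdef
    set s : Set (ℝ × ℝ) := Metric.closedBall 0 R with hsdef
    -- Lipschitz constant on s
    obtain ⟨p₀, hp₀, hK⟩ := (isCompact_closedBall (0 : ℝ × ℝ) R).exists_isMaxOn
      ⟨0, Metric.mem_closedBall_self (norm_nonneg _)⟩
      ((continuous_nnnorm.comp (hVc.continuous_fderiv one_ne_zero)).continuousOn)
    set K := ‖fderiv ℝ V p₀‖₊ with hKdef
    have hlip : LipschitzOnWith K V s :=
      (convex_closedBall _ _).lipschitzOnWith_of_nnnorm_fderiv_le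
        (fun p _ => (hVc.differentiable one_ne_zero) p) (fun p hp => hK hp)
    -- the two solutions
    set f : ℝ → ℝ × ℝ := fun t => (u t, u' t) with hfdef
    set g : ℝ → ℝ × ℝ := fun t => (u (-t), -u' (-t)) with hgdef
    have hIcc0 : Icc (0:ℝ) x ⊆ Icc (-x) x := Icc_subset_Icc (by linarith) le_rfl
    have hmemI : ∀ t ∈ Icc (0:ℝ) x, t ∈ I := fun t ht => hsub (hIcc0 ht)
    have hmemI' : ∀ t ∈ Icc (0:ℝ) x, -t ∈ I := fun t ht =>
      hsub ⟨by linarith [ht.2], by linarith [ht.1]⟩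
    have heq : EqOn f g (Icc 0 x) := by
      apply ODE_solution_unique_of_mem_Icc_right (v := fun _ => V) (s := fun _ => s)
        (K := K) (fun _ _ => hlip)
      · exact ((contu.mono hsub).prodMk (contu'.mono hsub)).mono hIcc0 |>.congr (fun t ht => rfl)
      · intro t ht
        have htI := hmemI t (Ico_subset_Icc_self ht)
        have h1 : HasDerivAt f (u' t, ψ (u t) * (1 + u' t ^ 2)) t := (hu t htI).prodMk (hu' t htI)
        exact h1.hasDerivWithinAt
      · intro t ht
        rw [hsdef, Metric.mem_closedBall, dist_zero_right]
        exact hR (hIcc0 (Ico_subset_Icc_self ht))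
      · have : ContinuousOn (fun t => (u (-t), -u' (-t))) (Icc 0 x) := by
          have hneg : ContinuousOn (fun t : ℝ => -t) (Icc (0:ℝ) x) := (continuous_neg).continuousOn
          have h1 : MapsTo (fun t : ℝ => -t) (Icc 0 x) I := fun t ht => hmemI' t ht
          exact ((contu.comp hneg h1).prodMk ((contu'.comp hneg h1).neg))
        exact this
      · intro t ht
        have htI := hmemI' t (Ico_subset_Icc_self ht)
        have h1 : HasDerivAt (fun t : ℝ => u (-t)) (u' (-t) * (-1)) t :=
          (hu (-t) htI).comp t (hasDerivAt_neg t)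
        have h2 : HasDerivAt (fun t : ℝ => u' (-t)) ((ψ (u (-t)) * (1 + u' (-t) ^ 2)) * (-1)) t :=
          (hu' (-t) htI).comp t (hasDerivAt_neg t)
        have h3 : HasDerivAt g (-u' (-t), ψ (u (-t)) * (1 + (-u' (-t)) ^ 2)) t := by
          have := h1.prodMk h2.neg
          convert this using 1
          · rfl
          · ext <;> simp <;> ring
        exact h3.hasDerivWithinAt
      · intro t ht
        rw [hsdef, Metric.mem_closedBall, dist_zero_right]
        have : ‖g t‖ = ‖(u (-t), u' (-t))‖ := by
          simp [hgdef, Prod.norm_def]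
        rw [this]
        exact hR (⟨by linarith [ht.2.le], by linarith [ht.1]⟩ : -t ∈ Icc (-x) x)
      · simp [hfdef, hgdef, hinit']
    have := heq (right_mem_Icc.2 hx0)
    exact (congrArg Prod.fst this).symm
  refine ⟨hconv, ?_, hmin⟩
  intro x hx hx'
  rcases le_total 0 x with h | h
  · exact key x h hx hx'
  · have := key (-x) (neg_nonneg.2 h) hx' (by rwa [neg_neg])
    rw [neg_neg] at this
    exact this.symm
end

section
/- Let φ: ]a,∞[ → ℝ be smooth with φ' < 0 everywhere (φ strictly decreasing), and let u: I → ]a,∞[ solve u'' = φ'(u)(1 + u'²) with u(0) = u₀, u'(0) = 0. Then u is strictly concave on I, even, and attains a strict global maximum at x = 0. -/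
open Real Set

/-- Auxiliary: evenness for nonnegative `x`, via ODE uniqueness. -/
lemma stmt2_even_aux (φ u u' : ℝ → ℝ) (I : Set ℝ)
    (hI : Convex ℝ I) (h0 : (0 : ℝ) ∈ I)
    (hφ : ContDiff ℝ (⊤ : ℕ∞) φ)
    (hu : ∀ x ∈ I, HasDerivAt u (u' x) x)
    (hu' : ∀ x ∈ I, HasDerivAt u' (deriv φ (u x) * (1 + (u' x) ^ 2)) x)
    (hinit' : u' 0 = 0) (x : ℝ) (hx0 : 0 ≤ x) (hxI : x ∈ I) (hnegI : -x ∈ I) :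
    u (-x) = u x := by
  rcases eq_or_lt_of_le hx0 with h | hx0
  · rw [← h]; norm_num
  -- The first order system vector field
  set v : ℝ × ℝ → ℝ × ℝ := fun p => (p.2, deriv φ p.1 * (1 + p.2 ^ 2)) with hv
  have hvC : ContDiff ℝ 1 v := by
    apply ContDiff.prodMk
    · exact contDiff_snd.of_le le_top
    · have hφ2 : ContDiff ℝ ((⊤ : ℕ∞) : WithTop ℕ∞) φ := hφ.of_le (by simp)
      exact (((hφ2.iterate_deriv 1).of_le (by simp)).comp contDiff_fst).mul
        (contDiff_const.add (contDiff_snd.pow 2))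
  -- inclusion of intervals into I
  have hIcc : Icc 0 x ⊆ I := hI.ordConnected.out h0 hxI
  have hIcc' : Icc (-x) 0 ⊆ I := hI.ordConnected.out hnegI h0
  have hmemI : ∀ t ∈ Icc 0 x, (-t) ∈ I := fun t ht =>
    hIcc' ⟨neg_le_neg ht.2, neg_nonpos.mpr ht.1⟩
  -- the two trajectories
  set F : ℝ → ℝ × ℝ := fun t => (u t, u' t) with hF
  set G : ℝ → ℝ × ℝ := fun t => (u (-t), -u' (-t)) with hG
  have hFd : ∀ t ∈ Icc 0 x, HasDerivAt F (v (F t)) t := fun t ht =>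
    (hu t (hIcc ht)).prodMk (hu' t (hIcc ht))
  have hGd : ∀ t ∈ Icc 0 x, HasDerivAt G (v (G t)) t := by
    intro t ht
    have h1 : HasDerivAt (fun s => u (-s)) (u' (-t) * (-1)) t :=
      (hu (-t) (hmemI t ht)).comp t (hasDerivAt_neg t)
    have h2 : HasDerivAt (fun s => u' (-s))
        ((deriv φ (u (-t)) * (1 + (u' (-t)) ^ 2)) * (-1)) t :=
      (hu' (-t) (hmemI t ht)).comp t (hasDerivAt_neg t)
    have := h1.prodMk h2.neg
    convert this using 1
    all_goals (simp only [hv, hG]; ext <;> simp)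
  -- continuity of trajectories
  have hFc : ContinuousOn F (Icc 0 x) := fun t ht =>
    (hFd t ht).continuousAt.continuousWithinAt
  have hGc : ContinuousOn G (Icc 0 x) := fun t ht =>
    (hGd t ht).continuousAt.continuousWithinAt
  -- a compact convex set containing both trajectories
  obtain ⟨R₁, hR₁⟩ := (isCompact_Icc.image_of_continuousOn hFc).isBounded.subset_closedBall 0
  obtain ⟨R₂, hR₂⟩ := (isCompact_Icc.image_of_continuousOn hGc).isBounded.subset_closedBall 0
  set R := max R₁ R₂ with hR
  have hFs : ∀ t ∈ Icc 0 x, F t ∈ Metric.closedBall (0 : ℝ × ℝ) R := fun t ht =>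
    Metric.closedBall_subset_closedBall (le_max_left _ _) (hR₁ ⟨t, ht, rfl⟩)
  have hGs : ∀ t ∈ Icc 0 x, G t ∈ Metric.closedBall (0 : ℝ × ℝ) R := fun t ht =>
    Metric.closedBall_subset_closedBall (le_max_right _ _) (hR₂ ⟨t, ht, rfl⟩)
  -- v is Lipschitz on the closed ball
  obtain ⟨C, hC⟩ := (isCompact_closedBall (0 : ℝ × ℝ) R).exists_bound_of_continuousOn
    ((hvC.continuous_fderiv one_ne_zero).continuousOn)
  set K : NNReal := ⟨max C 0, le_max_right _ _⟩ with hK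
  have hlip : LipschitzOnWith K v (Metric.closedBall (0 : ℝ × ℝ) R) := by
    apply (convex_closedBall _ _).lipschitzOnWith_of_nnnorm_hasFDerivWithin_le
      (f' := fderiv ℝ v)
      (fun y hy => (hvC.differentiable one_ne_zero y).hasFDerivAt.hasFDerivWithinAt)
    intro y hy
    rw [← NNReal.coe_le_coe]
    exact (hC y hy).trans (le_max_left _ _)
  -- uniqueness
  have huniq : EqOn F G (Icc 0 x) := by
    apply ODE_solution_unique_of_mem_Icc_right (v := fun _ : ℝ => v)
      (s := fun _ => Metric.closedBall (0 : ℝ × ℝ) R) (fun _ _ => hlip) hFc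
      (fun t ht => (hFd t (Ico_subset_Icc_self ht)).hasDerivWithinAt)
      (fun t ht => hFs t (Ico_subset_Icc_self ht)) hGc
      (fun t ht => (hGd t (Ico_subset_Icc_self ht)).hasDerivWithinAt)
      (fun t ht => hGs t (Ico_subset_Icc_self ht))
    simp [hF, hG, hinit']
  have := huniq (right_mem_Icc.mpr hx0.le)
  exact (congrArg Prod.fst this).symm

/-- For smooth `φ` with `φ' < 0` on `]a,∞[`, a solution of
`u'' = φ'(u)(1 + u'²)` with `u(0) = u₀`, `u'(0) = 0` is strictly concave, even,
and attains a strict global maximum at `x = 0`. -/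
theorem stmt2 (a u₀ : ℝ) (φ u u' : ℝ → ℝ) (I : Set ℝ)
    (hI : Convex ℝ I) (h0 : (0 : ℝ) ∈ I)
    (hφ : ContDiff ℝ (⊤ : ℕ∞) φ)
    (hφ' : ∀ y ∈ Ioi a, deriv φ y < 0)
    (hmem : ∀ x ∈ I, u x ∈ Ioi a)
    (hu : ∀ x ∈ I, HasDerivAt u (u' x) x)
    (hu' : ∀ x ∈ I, HasDerivAt u' (deriv φ (u x) * (1 + (u' x) ^ 2)) x)
    (hinit : u 0 = u₀) (hinit' : u' 0 = 0) :
    StrictConcaveOn ℝ I u ∧ (∀ x, x ∈ I → -x ∈ I → u (-x) = u x) ∧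
      (∀ x ∈ I, x ≠ 0 → u x < u 0) := by
  have hcu : ContinuousOn u I := fun t ht => (hu t ht).continuousAt.continuousWithinAt
  have hcu' : ContinuousOn u' I := fun t ht => (hu' t ht).continuousAt.continuousWithinAt
  have hneg : ∀ y ∈ I, deriv φ (u y) * (1 + (u' y) ^ 2) < 0 := fun y hy =>
    mul_neg_of_neg_of_pos (hφ' _ (hmem y hy)) (by positivity)
  have hdu' : ∀ y ∈ interior I, deriv u' y < 0 := by
    intro y hy
    rw [(hu' y (interior_subset hy)).deriv]
    exact hneg y (interior_subset hy)
  have hanti : StrictAntiOn u' I :=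
    strictAntiOn_of_deriv_neg hI hcu' hdu'
  refine ⟨?_, ?_, ?_⟩
  · apply strictConcaveOn_of_deriv2_neg hI hcu
    intro y hy
    have heq : deriv u =ᶠ[nhds y] u' := by
      filter_upwards [isOpen_interior.mem_nhds hy] with z hz
      exact (hu z (interior_subset hz)).deriv
    show deriv (deriv u) y < 0
    rw [heq.deriv_eq, (hu' y (interior_subset hy)).deriv]
    exact hneg y (interior_subset hy)
  · intro x hxI hnegI
    rcases le_or_gt 0 x with h | h
    · exact stmt2_even_aux φ u u' I hI h0 hφ hu hu' hinit' x h hxI hnegI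
    · have := stmt2_even_aux φ u u' I hI h0 hφ hu hu' hinit' (-x) (by linarith) hnegI
        (by rwa [neg_neg])
      rw [neg_neg] at this
      exact this.symm
  · intro x hxI hx0
    rcases hx0.lt_or_gt with h | h
    · -- x < 0
      have hIcc : Icc x 0 ⊆ I := hI.ordConnected.out hxI h0
      obtain ⟨c, hc, hcs⟩ := exists_hasDerivAt_eq_slope u u' h
        (hcu.mono hIcc) (fun z hz => hu z (hIcc (Ioo_subset_Icc_self hz)))
      have hcI : c ∈ I := hIcc (Ioo_subset_Icc_self hc)
      have : u' 0 < u' c := hanti hcI h0 hc.2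
      rw [hinit'] at this
      have hx : (0 : ℝ) - x > 0 := by linarith
      have := mul_pos this hx
      rw [hcs, div_mul_cancel₀ _ (ne_of_gt hx)] at this
      linarith
    · -- 0 < x
      have hIcc : Icc 0 x ⊆ I := hI.ordConnected.out h0 hxI
      obtain ⟨c, hc, hcs⟩ := exists_hasDerivAt_eq_slope u u' h
        (hcu.mono hIcc) (fun z hz => hu z (hIcc (Ioo_subset_Icc_self hz)))
      have hcI : c ∈ I := hIcc (Ioo_subset_Icc_self hc)
      have : u' c < u' 0 := hanti h0 hcI hc.1
      rw [hinit'] at this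
      have hx : x - 0 > 0 := by linarith
      have := mul_neg_of_neg_of_pos this hx
      rw [hcs, div_mul_cancel₀ _ (ne_of_gt hx)] at this
      linarith
end

section
/- Let φ: ]a,∞[ → ]b,c[ be a strictly increasing C¹ diffeomorphism and let u solve u'' = φ'(u)(1+u'²), u(0)=u₀, u'(0)=0, with maximal interval of existence ]-Λ, Λ[. If c < +∞ (i.e. φ is bounded above), then u'(x) is bounded: for all x, |u'(x)| ≤ √(e^{2(c - φ(u₀))} - 1). -/
open Real Set

/-- If `φ : ]a,∞[ → ]b,c[` is a strictly increasing C¹ diffeomorphism with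
`c < +∞`, then the derivative of the `[φ,e₃]`-catenary profile solving
`u'' = φ'(u)(1+u'²)`, `u(0) = u₀`, `u'(0) = 0` on `]-Λ,Λ[` satisfies
`|u'(x)| ≤ √(e^{2(c - φ(u₀))} - 1)`. -/
theorem stmt3 (a b c u₀ Λ : ℝ) (φ u u' : ℝ → ℝ)
    (hφ : ContDiff ℝ (⊤ : ℕ∞) φ)
    (hmono : StrictMonoOn φ (Ioi a))
    (hmaps : MapsTo φ (Ioi a) (Ioo b c))
    (hsurj : SurjOn φ (Ioi a) (Ioo b c))
    (hu₀ : u₀ ∈ Ioi a)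
    (h0 : (0 : ℝ) ∈ Ioo (-Λ) Λ)
    (hmem : ∀ x ∈ Ioo (-Λ) Λ, u x ∈ Ioi a)
    (hu : ∀ x ∈ Ioo (-Λ) Λ, HasDerivAt u (u' x) x)
    (hu' : ∀ x ∈ Ioo (-Λ) Λ, HasDerivAt u' (deriv φ (u x) * (1 + (u' x) ^ 2)) x)
    (hinit : u 0 = u₀) (hinit' : u' 0 = 0) :
    ∀ x ∈ Ioo (-Λ) Λ, |u' x| ≤ Real.sqrt (Real.exp (2 * (c - φ u₀)) - 1) := by
  set H : ℝ → ℝ := fun x => (1 + u' x ^ 2) * Real.exp (-2 * φ (u x)) with hH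
  have hHderiv : ∀ x ∈ Ioo (-Λ) Λ, HasDerivAt H 0 x := by
    intro x hx
    have hφu : HasDerivAt (fun y => φ (u y)) (deriv φ (u x) * u' x) x :=
      ((hφ.differentiable (by simp) (u x)).hasDerivAt).comp x (hu x hx)
    have h1 : HasDerivAt (fun y => 1 + u' y ^ 2)
        (2 * u' x * (deriv φ (u x) * (1 + (u' x) ^ 2))) x := by
      have := ((hu' x hx).pow 2).const_add 1
      simpa [mul_comm, mul_assoc, mul_left_comm] using this
    have h2 : HasDerivAt (fun y => Real.exp (-2 * φ (u y)))
        (Real.exp (-2 * φ (u x)) * (-2 * (deriv φ (u x) * u' x))) x := by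
      have := (hφu.const_mul (-2)).exp
      simpa [mul_comm, mul_assoc, mul_left_comm] using this
    have : HasDerivAt H _ x := h1.mul h2
    convert this using 1
    ring
  have hconst : ∀ x ∈ Ioo (-Λ) Λ, H x = H 0 := by
    intro x hx
    have hconv : Convex ℝ (Ioo (-Λ) Λ) := convex_Ioo _ _
    have hb := Convex.norm_image_sub_le_of_norm_hasDerivWithin_le
      (f' := fun _ => (0:ℝ)) (C := 0)
      (fun y hy => (hHderiv y hy).hasDerivWithinAt)
      (fun y hy => by simp) hconv h0 hx
    have : ‖H x - H 0‖ ≤ 0 := by simpa using hb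
    have := le_antisymm this (norm_nonneg _)
    rwa [norm_eq_abs, abs_eq_zero, sub_eq_zero] at this
  intro x hx
  have hH0 : H 0 = Real.exp (-2 * φ u₀) := by
    simp [hH, hinit, hinit']
  have hx0 : H x = Real.exp (-2 * φ u₀) := (hconst x hx).trans hH0
  have hexp : (1 + u' x ^ 2) = Real.exp (2 * (φ (u x) - φ u₀)) := by
    have hne : Real.exp (-2 * φ (u x)) ≠ 0 := Real.exp_ne_zero _
    field_simp [hH] at hx0
    rw [eq_comm]
    calc Real.exp (2 * (φ (u x) - φ u₀))
        = Real.exp (-2 * φ u₀) / Real.exp (-2 * φ (u x)) := by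
          rw [← Real.exp_sub]; ring_nf
      _ = 1 + u' x ^ 2 := by
          rw [div_eq_iff hne]
          simpa [hH] using hx0.symm
  have hlt : φ (u x) < c := (hmaps (hmem x hx)).2
  have hle : (1 + u' x ^ 2) ≤ Real.exp (2 * (c - φ u₀)) := by
    rw [hexp]
    exact Real.exp_le_exp.mpr (by nlinarith)
  have : u' x ^ 2 ≤ Real.exp (2 * (c - φ u₀)) - 1 := by linarith
  calc |u' x| = Real.sqrt (u' x ^ 2) := (Real.sqrt_sq_eq_abs _).symm
    _ ≤ Real.sqrt (Real.exp (2 * (c - φ u₀)) - 1) := Real.sqrt_le_sqrt this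
end

section
/- Let φ: ]a,∞[ → ℝ be a strictly increasing smooth diffeomorphism onto its image, and fix u₀ ∈ ]a,∞[ with z₀ = φ(u₀). Define 𝒳(z) = ∫_{z₀}^{z} dτ / (λ(τ) √(e^{2(τ-z₀)} - 1)) for z > z₀, where λ(z) = φ'(φ⁻¹(z)). Then the function u(x) = (𝒳 ∘ φ)⁻¹(x) satisfies u'' = φ'(u)(1 + u'²) with u(0)=u₀, u'(0)=0 (as limits at 0⁺), on the interval where it is defined. -/
open Real Set Filter

/-- auxiliary: the square-root factor in the integrand -/
noncomputable def sq1 (z₀ w : ℝ) : ℝ := Real.sqrt (Real.exp (2 * (w - z₀)) - 1)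

lemma sq1_pos {z₀ w : ℝ} (h : z₀ < w) : 0 < sq1 z₀ w := by
  apply Real.sqrt_pos.mpr
  have h1 : (1 : ℝ) < Real.exp (2 * (w - z₀)) := by
    rw [show (1:ℝ) = Real.exp 0 by simp]
    exact Real.exp_lt_exp.mpr (by nlinarith)
  linarith

lemma sq1_zero {z₀ w : ℝ} (h : w ≤ z₀) : sq1 z₀ w = 0 := by
  apply Real.sqrt_eq_zero'.mpr
  have h1 : Real.exp (2 * (w - z₀)) ≤ Real.exp 0 := Real.exp_le_exp.mpr (by nlinarith)
  rw [Real.exp_zero] at h1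
  linarith

lemma sq1_sq {z₀ w : ℝ} (h : z₀ ≤ w) : sq1 z₀ w ^ 2 = Real.exp (2 * (w - z₀)) - 1 := by
  apply Real.sq_sqrt
  have h1 : Real.exp 0 ≤ Real.exp (2 * (w - z₀)) := Real.exp_le_exp.mpr (by nlinarith)
  rw [Real.exp_zero] at h1
  linarith

lemma sq1_cont (z₀ : ℝ) : Continuous (sq1 z₀) := by
  unfold sq1; fun_prop

/-- auxiliary: the integrand of 𝒳 -/
noncomputable def itg (φ φinv : ℝ → ℝ) (z₀ τ : ℝ) : ℝ :=
  1 / (deriv φ (φinv τ) * sq1 z₀ τ)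

lemma itg_nonneg {φ φinv : ℝ → ℝ} {z₀ τ : ℝ} (h : 0 ≤ deriv φ (φinv τ)) :
    0 ≤ itg φ φinv z₀ τ :=
  one_div_nonneg.mpr (mul_nonneg h (Real.sqrt_nonneg _))

lemma itg_zero {φ φinv : ℝ → ℝ} {z₀ τ : ℝ} (h : τ ≤ z₀) : itg φ φinv z₀ τ = 0 := by
  rw [itg, sq1_zero h, mul_zero, div_zero]

/-- The explicit integral representation of the `[φ,e₃]`-catenary: if
`𝒳(z) = ∫_{z₀}^{z} dτ / (λ(τ) √(e^{2(τ-z₀)} - 1))` with `λ = φ' ∘ φ⁻¹`, `z₀ = φ(u₀)`,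
then `u = (𝒳 ∘ φ)⁻¹` satisfies `u'' = φ'(u)(1 + u'²)` with `u(0⁺) = u₀`, `u'(0⁺) = 0`. -/
theorem stmt4 (a u₀ z₀ Λ : ℝ) (φ φinv u X : ℝ → ℝ)
    (hφ : ContDiff ℝ (⊤ : ℕ∞) φ)
    (hmono : StrictMonoOn φ (Ioi a))
    (hu₀ : u₀ ∈ Ioi a) (hz₀ : z₀ = φ u₀)
    (hinv : ∀ y ∈ Ioi a, φinv (φ y) = y)
    (hX : ∀ z, X z = ∫ τ in z₀..z,
      1 / (deriv φ (φinv τ) * Real.sqrt (Real.exp (2 * (τ - z₀)) - 1)))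
    (hΛ : 0 < Λ)
    (hmem : ∀ x ∈ Ioo 0 Λ, u x ∈ Ioi a)
    (hcont : ContinuousOn u (Ico 0 Λ))
    (hdiff : ∀ x ∈ Ioo 0 Λ, DifferentiableAt ℝ u x ∧ DifferentiableAt ℝ (deriv u) x)
    (hinvrel : ∀ x ∈ Ioo 0 Λ, X (φ (u x)) = x) :
    (∀ x ∈ Ioo 0 Λ, deriv (deriv u) x = deriv φ (u x) * (1 + (deriv u x) ^ 2)) ∧
      Tendsto u (nhdsWithin 0 (Ioi 0)) (nhds u₀) ∧
      Tendsto (deriv u) (nhdsWithin 0 (Ioi 0)) (nhds 0) := by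
  have hφc : Continuous φ := hφ.continuous
  have hφd : Differentiable ℝ φ := hφ.differentiable (by simp)
  have hφ'c : Continuous (deriv φ) := hφ.continuous_deriv (by simp)
  have hXeq : ∀ z, X z = ∫ τ in z₀..z, itg φ φinv z₀ τ := by
    intro z; rw [hX]; rfl
  -- X vanishes below z₀
  have Xzero : ∀ w, w ≤ z₀ → X w = 0 := by
    intro w hw
    rw [hXeq, intervalIntegral.integral_congr (g := fun _ => (0:ℝ))
      (fun τ hτ => by
        have hτ' : τ ≤ z₀ := by
          rw [uIcc_of_ge hw] at hτ; exact hτ.2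
        exact itg_zero hτ')]
    simp
  -- φ(u x) > z₀
  have hz : ∀ x ∈ Ioo 0 Λ, z₀ < φ (u x) := by
    intro x hx
    by_contra hle
    push_neg at hle
    have h1 := hinvrel x hx
    rw [Xzero _ hle] at h1
    exact (ne_of_gt hx.1) h1.symm
  -- u₀ < u x
  have hu₀lt : ∀ x ∈ Ioo 0 Λ, u₀ < u x := by
    intro x hx
    by_contra hle
    push_neg at hle
    have h1 : φ (u x) ≤ φ u₀ := hmono.monotoneOn (hmem x hx) hu₀ hle
    rw [← hz₀] at h1
    exact absurd (hz x hx) (not_lt.mpr h1)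
  have memIoi : ∀ {y : ℝ}, u₀ ≤ y → y ∈ Ioi a := fun hy => lt_of_lt_of_le hu₀ hy
  -- IVT for the image
  have hIVT : ∀ x ∈ Ioo 0 Λ, ∀ τ ∈ Icc z₀ (φ (u x)), ∃ y, y ∈ Icc u₀ (u x) ∧ φ y = τ := by
    intro x hx τ hτ
    have hsub := intermediate_value_Icc (le_of_lt (hu₀lt x hx)) hφc.continuousOn
    rw [← hz₀] at hsub
    obtain ⟨y, hy, hyt⟩ := hsub hτ
    exact ⟨y, hy, hyt⟩
  -- deriv φ nonneg on Ioi a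
  have dnn : ∀ y ∈ Ioi a, 0 ≤ deriv φ y := by
    intro y hy
    have hd : HasDerivAt φ (deriv φ y) y := (hφd y).hasDerivAt
    rw [hasDerivAt_iff_tendsto_slope] at hd
    have hd' : Tendsto (slope φ y) (nhdsWithin y (Ioi y)) (nhds (deriv φ y)) :=
      hd.mono_left (nhdsWithin_mono y (fun t ht => ne_of_gt ht))
    refine ge_of_tendsto hd' ?_
    filter_upwards [self_mem_nhdsWithin] with t ht
    have hty : y < t := ht
    have h1 : φ y < φ t := hmono hy (lt_trans hy hty) hty
    rw [slope_def_field]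
    exact div_nonneg (by linarith) (by linarith)
  -- integrand nonneg on the relevant interval
  have h_nonneg_on : ∀ x ∈ Ioo 0 Λ, ∀ τ ∈ Icc z₀ (φ (u x)), 0 ≤ itg φ φinv z₀ τ := by
    intro x hx τ hτ
    obtain ⟨y, hy, rfl⟩ := hIVT x hx τ hτ
    have hyI : y ∈ Ioi a := memIoi hy.1
    refine itg_nonneg ?_
    rw [hinv y hyI]
    exact dnn y hyI
  -- integrability on z₀..φ(u x)
  have hInt : ∀ x ∈ Ioo 0 Λ, IntervalIntegrable (itg φ φinv z₀) MeasureTheory.volume z₀ (φ (u x)) := by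
    intro x hx
    by_contra hni
    have h1 := hinvrel x hx
    rw [hXeq, intervalIntegral.integral_undef hni] at h1
    exact (ne_of_gt hx.1) h1.symm
  -- local inverse near image points
  have inv_near : ∀ y ∈ Ioi a, ∀ ε > (0:ℝ), ∀ᶠ w in nhds (φ y),
      ∃ y' ∈ Ioi a, φ y' = w ∧ |y' - y| ≤ ε := by
    intro y hy ε hε
    have hay : a < y := hy
    set ε₁ := min ε ((y - a)/2) with hε₁def
    have hε₁ : 0 < ε₁ := lt_min hε (by linarith)
    have hε₁le : ε₁ ≤ (y - a)/2 := min_le_right _ _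
    have hya : a < y - ε₁ := by linarith
    have h1 : y - ε₁ ∈ Ioi a := hya
    have h3 : y + ε₁ ∈ Ioi a := by simp only [mem_Ioi]; linarith
    have hlt1 : φ (y - ε₁) < φ y := hmono h1 hy (by linarith)
    have hlt2 : φ y < φ (y + ε₁) := hmono hy h3 (by linarith)
    have hmemn : Ioo (φ (y - ε₁)) (φ (y + ε₁)) ∈ nhds (φ y) := isOpen_Ioo.mem_nhds ⟨hlt1, hlt2⟩
    filter_upwards [hmemn] with w hw
    have hsub := intermediate_value_Icc (by linarith : y - ε₁ ≤ y + ε₁) hφc.continuousOn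
    obtain ⟨y', hy', rfl⟩ := hsub ⟨le_of_lt hw.1, le_of_lt hw.2⟩
    refine ⟨y', lt_of_lt_of_le hya hy'.1, rfl, ?_⟩
    have h4 : ε₁ ≤ ε := min_le_left _ _
    rw [abs_sub_le_iff]
    constructor <;> [skip; skip] <;> [linarith [hy'.2]; linarith [hy'.1]]
  -- continuity of φinv at image points
  have contInv : ∀ y ∈ Ioi a, ContinuousAt φinv (φ y) := by
    intro y hy
    rw [ContinuousAt, hinv y hy, Metric.tendsto_nhds]
    intro ε hε
    filter_upwards [inv_near y hy (ε/2) (by linarith)] with w hw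
    obtain ⟨y', hy', hwy', hdist⟩ := hw
    rw [← hwy', hinv y' hy', Real.dist_eq]
    linarith [hdist]
  -- FTC at good points
  have ftc : ∀ y ∈ Ioi a, z₀ < φ y → deriv φ y ≠ 0 →
      IntervalIntegrable (itg φ φinv z₀) MeasureTheory.volume z₀ (φ y) →
      HasDerivAt X (itg φ φinv z₀ (φ y)) (φ y) := by
    intro y hy hzy hdy hint
    -- pointwise continuity of itg at any good point
    have hcontAt : ∀ w, z₀ < w → (∃ y' ∈ Ioi a, φ y' = w) → deriv φ (φinv w) ≠ 0 →
        ContinuousAt (itg φ φinv z₀) w := by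
      rintro w hw ⟨y', hy', rfl⟩ hd
      have c1 : ContinuousAt (fun τ => deriv φ (φinv τ)) (φ y') :=
        hφ'c.continuousAt.comp (contInv y' hy')
      have c2 : ContinuousAt (sq1 z₀) (φ y') := (sq1_cont z₀).continuousAt
      have hden : deriv φ (φinv (φ y')) * sq1 z₀ (φ y') ≠ 0 :=
        mul_ne_zero hd (ne_of_gt (sq1_pos hw))
      exact continuousAt_const.div (c1.mul c2) hden
    -- the good set is a neighborhood of φ y
    set T : Set ℝ := {w | z₀ < w ∧ (∃ y' ∈ Ioi a, φ y' = w) ∧ deriv φ (φinv w) ≠ 0} with hT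
    have hTnhds : T ∈ nhds (φ y) := by
      have e1 : ∀ᶠ w in nhds (φ y), z₀ < w := eventually_gt_nhds hzy
      have e2 : ∀ᶠ w in nhds (φ y), ∃ y' ∈ Ioi a, φ y' = w := by
        filter_upwards [inv_near y hy 1 one_pos] with w hw
        obtain ⟨y', h1, h2, _⟩ := hw
        exact ⟨y', h1, h2⟩
      have e3 : ∀ᶠ w in nhds (φ y), deriv φ (φinv w) ≠ 0 := by
        have c1 : ContinuousAt (fun τ => deriv φ (φinv τ)) (φ y) :=
          hφ'c.continuousAt.comp (contInv y hy)
        refine c1.eventually_ne ?_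
        rw [hinv y hy]; exact hdy
      filter_upwards [e1, e2, e3] with w h1 h2 h3 using ⟨h1, h2, h3⟩
    have hcontOn : ContinuousOn (itg φ φinv z₀) (interior T) := by
      intro w hw
      have hwT : w ∈ T := interior_subset hw
      exact (hcontAt w hwT.1 hwT.2.1 hwT.2.2).continuousWithinAt
    have hsm : StronglyMeasurableAtFilter (itg φ φinv z₀) (nhds (φ y)) MeasureTheory.volume :=
      ⟨interior T, interior_mem_nhds.mpr hTnhds,
        hcontOn.aestronglyMeasurable isOpen_interior.measurableSet⟩
    have hca : ContinuousAt (itg φ φinv z₀) (φ y) := by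
      refine hcontAt (φ y) hzy ⟨y, hy, rfl⟩ ?_
      rw [hinv y hy]; exact hdy
    have hder := intervalIntegral.integral_hasDerivAt_right hint hsm hca
    have hXfun : X = fun w => ∫ τ in z₀..w, itg φ φinv z₀ τ := funext hXeq
    rw [hXfun]
    exact hder
  -- key identity at points where deriv φ (u x) ≠ 0
  have keyW : ∀ x ∈ Ioo 0 Λ, deriv φ (u x) ≠ 0 → deriv u x = sq1 z₀ (φ (u x)) := by
    intro x hx hd
    have hux : u x ∈ Ioi a := hmem x hx
    have hX' : HasDerivAt X (itg φ φinv z₀ (φ (u x))) (φ (u x)) :=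
      ftc (u x) hux (hz x hx) hd (hInt x hx)
    have hu' : HasDerivAt u (deriv u x) x := ((hdiff x hx).1).hasDerivAt
    have hφu : HasDerivAt (fun t => φ (u t)) (deriv φ (u x) * deriv u x) x := by
      have := ((hφd (u x)).hasDerivAt).comp x hu'
      simpa [Function.comp_def] using this
    have hcomp : HasDerivAt (fun t => X (φ (u t)))
        (itg φ φinv z₀ (φ (u x)) * (deriv φ (u x) * deriv u x)) x := by
      have := hX'.comp x hφu
      simpa [Function.comp_def] using this
    have hid : HasDerivAt (fun t => X (φ (u t))) 1 x := by
      have heq : (fun t => X (φ (u t))) =ᶠ[nhds x] id := by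
        filter_upwards [isOpen_Ioo.mem_nhds hx] with t ht using hinvrel t ht
      exact (hasDerivAt_id x).congr_of_eventuallyEq heq
    have heq1 : itg φ φinv z₀ (φ (u x)) * (deriv φ (u x) * deriv u x) = 1 := hcomp.unique hid
    have hsp : 0 < sq1 z₀ (φ (u x)) := sq1_pos (hz x hx)
    rw [itg, hinv (u x) hux] at heq1
    have hne : deriv φ (u x) * sq1 z₀ (φ (u x)) ≠ 0 := mul_ne_zero hd (ne_of_gt hsp)
    field_simp at heq1
    -- heq1 should now give: deriv φ (u x) * deriv u x = deriv φ (u x) * sq1 z₀ (φ (u x))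
    linarith [heq1]
  -- density of good points
  have dense_W : ∀ x ∈ Ioo 0 Λ, ∀ δ > (0:ℝ), ∃ x' ∈ Ioo 0 Λ, |x' - x| < δ ∧ deriv φ (u x') ≠ 0 := by
    intro x hx δ hδ
    set x₂ := min (x + δ/2) ((x + Λ)/2) with hx₂def
    have hxx₂ : x < x₂ := lt_min (by linarith) (by linarith [hx.2])
    have hx₂Λ : x₂ < Λ := lt_of_le_of_lt (min_le_right _ _) (by linarith [hx.2])
    have hx₂d : x₂ - x ≤ δ/2 := by
      have := min_le_left (x + δ/2) ((x + Λ)/2); linarith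
    have hx₂mem : x₂ ∈ Ioo 0 Λ := ⟨lt_trans hx.1 hxx₂, hx₂Λ⟩
    have hne : u x ≠ u x₂ := by
      intro hEq
      have h1 := hinvrel x hx
      have h2 := hinvrel x₂ hx₂mem
      rw [hEq] at h1
      rw [h1] at h2
      exact (ne_of_lt hxx₂) h2
    set p := min (u x) (u x₂) with hp
    set q := max (u x) (u x₂) with hq
    have hpq : p < q := min_lt_max.mpr hne
    have hpIoi : p ∈ Ioi a := by
      rcases min_choice (u x) (u x₂) with h | h <;> rw [hp, h]
      exacts [hmem x hx, hmem x₂ hx₂mem]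
    have hqIoi : q ∈ Ioi a := by
      rcases max_choice (u x) (u x₂) with h | h <;> rw [hq, h]
      exacts [hmem x hx, hmem x₂ hx₂mem]
    have hφpq : φ p < φ q := hmono hpIoi hqIoi hpq
    obtain ⟨c, hc, hc'⟩ := exists_hasDerivAt_eq_slope φ (deriv φ) hpq
      hφc.continuousOn (fun t _ => (hφd t).hasDerivAt)
    have hcpos : 0 < deriv φ c := by
      rw [hc']
      exact div_pos (by linarith) (by linarith [hpq])
    -- find x' with u x' = c via IVT on u
    have hucont : ContinuousOn u (uIcc x x₂) := by
      refine hcont.mono ?_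
      rw [uIcc_of_le (le_of_lt hxx₂)]
      intro t ht
      exact ⟨le_trans (le_of_lt hx.1) ht.1, lt_of_le_of_lt ht.2 hx₂Λ⟩
    have hsub := intermediate_value_uIcc hucont
    have hcmem : c ∈ uIcc (u x) (u x₂) := by
      rw [uIcc, ← hp, ← hq]
      exact ⟨le_of_lt hc.1, le_of_lt hc.2⟩
    obtain ⟨x', hx'mem, hx'c⟩ := hsub hcmem
    rw [uIcc_of_le (le_of_lt hxx₂)] at hx'mem
    refine ⟨x', ⟨lt_of_lt_of_le hx.1 hx'mem.1, lt_of_le_of_lt hx'mem.2 hx₂Λ⟩, ?_, ?_⟩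
    · rw [abs_sub_lt_iff]
      constructor <;> [linarith [hx'mem.2, hx₂d]; linarith [hx'mem.1]]
    · rw [hx'c]
      exact ne_of_gt hcpos
  -- key identity everywhere
  have key : ∀ x ∈ Ioo 0 Λ, deriv u x = sq1 z₀ (φ (u x)) := by
    intro x hx
    set W : Set ℝ := {t | t ∈ Ioo 0 Λ ∧ deriv φ (u t) ≠ 0} with hW
    have hclus : (nhdsWithin x W).NeBot := by
      rw [← mem_closure_iff_nhdsWithin_neBot, Metric.mem_closure_iff]
      intro δ hδ
      obtain ⟨x', hx'1, hx'2, hx'3⟩ := dense_W x hx δ hδ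
      exact ⟨x', ⟨hx'1, hx'3⟩, by rw [Real.dist_eq, abs_sub_comm]; exact hx'2⟩
    have t1 : Tendsto (deriv u) (nhdsWithin x W) (nhds (deriv u x)) :=
      ((hdiff x hx).2.continuousAt).continuousWithinAt
    have t2 : Tendsto (fun t => sq1 z₀ (φ (u t))) (nhdsWithin x W) (nhds (sq1 z₀ (φ (u x)))) := by
      have hca : ContinuousAt (fun t => sq1 z₀ (φ (u t))) x :=
        ((sq1_cont z₀).continuousAt).comp (hφc.continuousAt.comp (hdiff x hx).1.continuousAt)
      exact hca.continuousWithinAt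
    have t3 : Tendsto (deriv u) (nhdsWithin x W) (nhds (sq1 z₀ (φ (u x)))) := by
      refine t2.congr' ?_
      filter_upwards [self_mem_nhdsWithin] with t ht
      exact (keyW t ht.1 ht.2).symm
    exact tendsto_nhds_unique t1 t3
  -- the ODE
  have ode : ∀ x ∈ Ioo 0 Λ, deriv (deriv u) x = deriv φ (u x) * (1 + deriv u x ^ 2) := by
    intro x hx
    have hEq : deriv u =ᶠ[nhds x] fun t => sq1 z₀ (φ (u t)) := by
      filter_upwards [isOpen_Ioo.mem_nhds hx] with t ht using key t ht
    rw [hEq.deriv_eq]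
    have hzx : z₀ < φ (u x) := hz x hx
    have hEpos : 0 < Real.exp (2 * (φ (u x) - z₀)) - 1 := Real.sqrt_pos.mp (sq1_pos hzx)
    have hlin : HasDerivAt (fun w => 2 * (w - z₀)) 2 (φ (u x)) := by
      simpa using ((hasDerivAt_id (φ (u x))).sub_const z₀).const_mul 2
    have hexp : HasDerivAt (fun w => Real.exp (2 * (w - z₀)) - 1)
        (Real.exp (2 * (φ (u x) - z₀)) * 2) (φ (u x)) := by
      have := ((Real.hasDerivAt_exp (2 * (φ (u x) - z₀))).comp (φ (u x)) hlin).sub_const 1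
      simpa [Function.comp] using this
    have hsqrt : HasDerivAt (sq1 z₀)
        (1 / (2 * Real.sqrt (Real.exp (2 * (φ (u x) - z₀)) - 1)) *
          (Real.exp (2 * (φ (u x) - z₀)) * 2)) (φ (u x)) := by
      have := (Real.hasDerivAt_sqrt (ne_of_gt hEpos)).comp (φ (u x)) hexp
      rw [show sq1 z₀ = fun w => Real.sqrt (Real.exp (2 * (w - z₀)) - 1) from rfl]
      simpa [sq1, Function.comp_def] using this
    have hu' : HasDerivAt u (deriv u x) x := ((hdiff x hx).1).hasDerivAt
    have hφu : HasDerivAt (fun t => φ (u t)) (deriv φ (u x) * deriv u x) x := by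
      have := ((hφd (u x)).hasDerivAt).comp x hu'
      simpa [Function.comp_def] using this
    have hfull : HasDerivAt (fun t => sq1 z₀ (φ (u t)))
        (1 / (2 * Real.sqrt (Real.exp (2 * (φ (u x) - z₀)) - 1)) *
          (Real.exp (2 * (φ (u x) - z₀)) * 2) * (deriv φ (u x) * deriv u x)) x := by
      have := hsqrt.comp x hφu
      simpa [Function.comp_def] using this
    rw [hfull.deriv]
    have hkey : deriv u x = Real.sqrt (Real.exp (2 * (φ (u x) - z₀)) - 1) := key x hx
    have hsne : Real.sqrt (Real.exp (2 * (φ (u x) - z₀)) - 1) ≠ 0 :=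
      ne_of_gt (Real.sqrt_pos.mpr hEpos)
    rw [hkey, Real.sq_sqrt (le_of_lt hEpos)]
    field_simp
    ring
  -- the limits
  have hevIoo : Ioo (0:ℝ) Λ ∈ nhdsWithin (0:ℝ) (Ioi 0) := Ioo_mem_nhdsGT_of_mem ⟨le_refl 0, hΛ⟩
  have tz : Tendsto (fun x => φ (u x)) (nhdsWithin 0 (Ioi 0)) (nhds z₀) := by
    rw [Metric.tendsto_nhds]
    intro ε hε
    have hfin : ∀ᶠ x in nhdsWithin (0:ℝ) (Ioi 0), x ∈ Ioo 0 Λ → φ (u x) < z₀ + ε := by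
      by_contra hcon
      rw [Filter.not_eventually] at hcon
      have hcon' : ∃ᶠ x in nhdsWithin (0:ℝ) (Ioi 0), x ∈ Ioo 0 Λ ∧ z₀ + ε ≤ φ (u x) := by
        refine hcon.mono ?_
        intro x hx
        push_neg at hx
        exact ⟨hx.1, hx.2⟩
      obtain ⟨x₁, hx₁, hx₁ε⟩ := hcon'.exists
      set M := z₀ + ε with hM
      have hMz : z₀ < M := by simp only [hM]; linarith
      have hMle : M ≤ φ (u x₁) := hx₁ε
      have hIntM : IntervalIntegrable (itg φ φinv z₀) MeasureTheory.volume z₀ M :=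
        (hInt x₁ hx₁).mono_set (by
          rw [uIcc_of_le (le_of_lt hMz), uIcc_of_le (le_of_lt (hz x₁ hx₁))]
          exact Icc_subset_Icc le_rfl hMle)
      have hXM0 : 0 ≤ X M := by
        rw [hXeq]
        refine intervalIntegral.integral_nonneg (le_of_lt hMz) ?_
        intro τ hτ
        exact h_nonneg_on x₁ hx₁ τ ⟨hτ.1, le_trans hτ.2 hMle⟩
      have hXMle : ∀ x ∈ Ioo 0 Λ, M ≤ φ (u x) → X M ≤ x := by
        intro x hx hMx
        have h1 : X (φ (u x)) - X M = ∫ τ in M..(φ (u x)), itg φ φinv z₀ τ := by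
          rw [hXeq, hXeq]
          exact intervalIntegral.integral_interval_sub_left (hInt x hx) hIntM
        have h2 : 0 ≤ ∫ τ in M..(φ (u x)), itg φ φinv z₀ τ := by
          refine intervalIntegral.integral_nonneg hMx ?_
          intro τ hτ
          exact h_nonneg_on x hx τ ⟨le_trans (le_of_lt hMz) hτ.1, hτ.2⟩
        have h3 := hinvrel x hx
        linarith
      have hXM_le0 : X M ≤ 0 := by
        by_contra hpos
        push_neg at hpos
        have hev2 : ∀ᶠ x in nhdsWithin (0:ℝ) (Ioi 0), x < X M :=
          mem_nhdsWithin_of_mem_nhds (Iio_mem_nhds hpos)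
        obtain ⟨x, hxm, hxlt⟩ := (hcon'.and_eventually hev2).exists
        exact absurd (hXMle x hxm.1 hxm.2) (not_le.mpr hxlt)
      have hXM : X M = 0 := le_antisymm hXM_le0 hXM0
      have hXzeroI : ∀ w ∈ Icc z₀ M, X w = 0 := by
        intro w hw
        have hIw : IntervalIntegrable (itg φ φinv z₀) MeasureTheory.volume z₀ w :=
          hIntM.mono_set (by
            rw [uIcc_of_le hw.1, uIcc_of_le (le_of_lt hMz)]
            exact Icc_subset_Icc le_rfl hw.2)
        have h0 : 0 ≤ X w := by
          rw [hXeq]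
          refine intervalIntegral.integral_nonneg hw.1 ?_
          intro τ hτ
          exact h_nonneg_on x₁ hx₁ τ ⟨hτ.1, le_trans hτ.2 (le_trans hw.2 hMle)⟩
        have h1 : X M - X w = ∫ τ in w..M, itg φ φinv z₀ τ := by
          rw [hXeq, hXeq]
          exact intervalIntegral.integral_interval_sub_left hIntM hIw
        have h2 : 0 ≤ ∫ τ in w..M, itg φ φinv z₀ τ := by
          refine intervalIntegral.integral_nonneg hw.2 ?_
          intro τ hτ
          exact h_nonneg_on x₁ hx₁ τ ⟨le_trans hw.1 hτ.1, le_trans hτ.2 hMle⟩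
        linarith
      obtain ⟨yM, hyM, hyMφ⟩ := hIVT x₁ hx₁ M ⟨le_of_lt hMz, hMle⟩
      have hyMIoi : yM ∈ Ioi a := memIoi hyM.1
      have hu₀yM : u₀ < yM := by
        by_contra hle
        push_neg at hle
        have h5 := hmono.monotoneOn hyMIoi hu₀ hle
        rw [hyMφ, ← hz₀] at h5
        exact absurd hMz (not_lt.mpr h5)
      obtain ⟨c, hc, hc'⟩ := exists_hasDerivAt_eq_slope φ (deriv φ) hu₀yM
        hφc.continuousOn (fun t _ => (hφd t).hasDerivAt)
      have hcIoi : c ∈ Ioi a := lt_trans hu₀ hc.1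
      have hcpos : 0 < deriv φ c := by
        rw [hc', hyMφ, ← hz₀]
        exact div_pos (by linarith) (by linarith [hc.1, hc.2])
      have hφc1 : z₀ < φ c := by
        rw [hz₀]; exact hmono hu₀ hcIoi hc.1
      have hφc2 : φ c < M := by
        rw [← hyMφ]; exact hmono hcIoi hyMIoi hc.2
      have hIc : IntervalIntegrable (itg φ φinv z₀) MeasureTheory.volume z₀ (φ c) :=
        hIntM.mono_set (by
          rw [uIcc_of_le (le_of_lt hφc1), uIcc_of_le (le_of_lt hMz)]
          exact Icc_subset_Icc le_rfl (le_of_lt hφc2))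
      have hXd : HasDerivAt X (itg φ φinv z₀ (φ c)) (φ c) :=
        ftc c hcIoi hφc1 (ne_of_gt hcpos) hIc
      have hX0 : HasDerivAt X 0 (φ c) := by
        have heq : X =ᶠ[nhds (φ c)] fun _ => 0 := by
          filter_upwards [isOpen_Ioo.mem_nhds (⟨hφc1, hφc2⟩ : φ c ∈ Ioo z₀ M)] with w hw
          exact hXzeroI w ⟨le_of_lt hw.1, le_of_lt hw.2⟩
        exact (hasDerivAt_const (φ c) (0:ℝ)).congr_of_eventuallyEq heq
      have hu2 := hXd.unique hX0
      have hitgpos : 0 < itg φ φinv z₀ (φ c) := by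
        rw [itg, hinv c hcIoi]
        exact div_pos one_pos (mul_pos hcpos (sq1_pos hφc1))
      rw [hu2] at hitgpos
      exact lt_irrefl 0 hitgpos
    filter_upwards [hevIoo, hfin] with x hx himp
    have h1 : z₀ < φ (u x) := hz x hx
    rw [Real.dist_eq, abs_of_pos (sub_pos.mpr h1)]
    linarith [himp hx]
  have hu_lim : Tendsto u (nhdsWithin 0 (Ioi 0)) (nhds u₀) := by
    have h2 : Tendsto φinv (nhds z₀) (nhds u₀) := by
      have h3 := contInv u₀ hu₀
      rw [ContinuousAt, hinv u₀ hu₀] at h3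
      rw [hz₀]; exact h3
    have h1 : Tendsto (fun x => φinv (φ (u x))) (nhdsWithin 0 (Ioi 0)) (nhds u₀) := h2.comp tz
    refine Filter.Tendsto.congr' ?_ h1
    filter_upwards [hevIoo] with x hx
    exact hinv (u x) (hmem x hx)
  have hd_lim : Tendsto (deriv u) (nhdsWithin 0 (Ioi 0)) (nhds 0) := by
    have hca : Tendsto (sq1 z₀) (nhds z₀) (nhds (sq1 z₀ z₀)) := (sq1_cont z₀).continuousAt
    rw [sq1_zero (le_refl z₀)] at hca
    have h1 : Tendsto (fun x => sq1 z₀ (φ (u x))) (nhdsWithin 0 (Ioi 0)) (nhds 0) := hca.comp tz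
    refine Filter.Tendsto.congr' ?_ h1
    filter_upwards [hevIoo] with x hx
    exact (key x hx).symm
  exact ⟨ode, hu_lim, hd_lim⟩
end

section
/- Let φ be smooth with φ' > 0 and φ'' ≥ 0 on ]a,∞[, and let (x(s), z(s), θ(s)) solve the system x' = cos θ, z' = sin θ, θ' = φ'(z) cos θ − sin θ / x for s > 0, with boundary behavior x(s) → 0, θ(s) → 0, z(s) → z₀ as s → 0⁺, and with lim_{s→0⁺} θ'(s) = φ'(z₀)/2 > 0. Then θ'(s) > 0 for all s > 0 in the maximal interval of existence. -/
open Real Set Filter Topology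

/-- For the generating curve system `x' = cos θ`, `z' = sin θ`,
`θ' = φ'(z) cos θ − sin θ / x` of a rotationally symmetric `[φ,e₃]`-minimal surface meeting
the axis orthogonally (`x → 0`, `θ → 0`, `z → z₀`, `θ' → φ'(z₀)/2 > 0` as `s → 0⁺`),
with `φ' > 0` and `φ'' ≥ 0`, the turning angle is strictly increasing: `θ'(s) > 0` for all
`s` in the maximal interval of existence. -/
theorem stmt6 (a z₀ S : ℝ) (hS : 0 < S) (φ x z θ θ' : ℝ → ℝ)
    (hφ : ContDiff ℝ (⊤ : ℕ∞) φ)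
    (hφ' : ∀ t ∈ Ioi a, 0 < deriv φ t)
    (hφ'' : ∀ t ∈ Ioi a, 0 ≤ deriv (deriv φ) t)
    (hz₀ : z₀ ∈ Ioi a)
    (hxpos : ∀ s ∈ Ioo 0 S, 0 < x s)
    (hzmem : ∀ s ∈ Ioo 0 S, z s ∈ Ioi a)
    (hx : ∀ s ∈ Ioo 0 S, HasDerivAt x (Real.cos (θ s)) s)
    (hz : ∀ s ∈ Ioo 0 S, HasDerivAt z (Real.sin (θ s)) s)
    (hθ : ∀ s ∈ Ioo 0 S, HasDerivAt θ (θ' s) s)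
    (hθ'eq : ∀ s ∈ Ioo 0 S, θ' s = deriv φ (z s) * Real.cos (θ s) - Real.sin (θ s) / x s)
    (hx0 : Tendsto x (nhdsWithin 0 (Ioi 0)) (nhds 0))
    (hθ0 : Tendsto θ (nhdsWithin 0 (Ioi 0)) (nhds 0))
    (hz0 : Tendsto z (nhdsWithin 0 (Ioi 0)) (nhds z₀))
    (hθ'0 : Tendsto θ' (nhdsWithin 0 (Ioi 0)) (nhds (deriv φ z₀ / 2)))
    (hpos : 0 < deriv φ z₀ / 2) :
    ∀ s ∈ Ioo 0 S, 0 < θ' s := by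
  by_contra hcon
  push_neg at hcon
  obtain ⟨s₁, hs₁, hθ's₁⟩ := hcon
  -- θ' continuous on Ioo 0 S
  have hphiI : ContDiff ℝ (⊤ : ℕ∞) φ := hφ.of_le (by simp)
  have hφ'cd : ContDiff ℝ (⊤ : ℕ∞) (deriv φ) := (contDiff_infty_iff_deriv.mp hphiI).2
  have hcontθ' : ContinuousOn θ' (Ioo 0 S) := by
    have hc : ContinuousOn
        (fun s => deriv φ (z s) * Real.cos (θ s) - Real.sin (θ s) / x s) (Ioo 0 S) := by
      have hzc : ContinuousOn z (Ioo 0 S) := fun t ht =>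
        (hz t ht).continuousAt.continuousWithinAt
      have hθc : ContinuousOn θ (Ioo 0 S) := fun t ht =>
        (hθ t ht).continuousAt.continuousWithinAt
      have hxc : ContinuousOn x (Ioo 0 S) := fun t ht =>
        (hx t ht).continuousAt.continuousWithinAt
      exact ((hφ'cd.continuous.comp_continuousOn hzc).mul
        (Real.continuous_cos.comp_continuousOn hθc)).sub
        ((Real.continuous_sin.comp_continuousOn hθc).div hxc
          (fun t ht => (hxpos t ht).ne'))
    exact hc.congr (fun t ht => hθ'eq t ht)
  -- θ' > 0 near 0
  have hev : ∀ᶠ s in 𝓝[>] (0:ℝ), 0 < θ' s := hθ'0.eventually (eventually_gt_nhds hpos)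
  obtain ⟨ε, hεpos, hεsub⟩ := mem_nhdsGT_iff_exists_Ioo_subset.mp hev
  rw [mem_Ioi] at hεpos
  set e : ℝ := min (ε / 2) (s₁ / 2) with he
  have hepos : 0 < e := lt_min (by linarith) (by linarith [hs₁.1])
  have hes₁ : e < s₁ := lt_of_le_of_lt (min_le_right _ _) (by linarith [hs₁.1])
  have hsmall : ∀ t, 0 < t → t ≤ e → 0 < θ' t := by
    intro t ht hte
    exact hεsub ⟨ht, lt_of_le_of_lt (hte.trans (min_le_left _ _)) (by linarith)⟩
  -- first nonpositive point
  set K : Set ℝ := {s | s ∈ Icc e s₁ ∧ θ' s ≤ 0} with hK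
  have hKsub : K ⊆ Icc e s₁ := fun t ht => ht.1
  have hIccsub : Icc e s₁ ⊆ Ioo 0 S := fun t ht => ⟨lt_of_lt_of_le hepos ht.1,
    lt_of_le_of_lt ht.2 hs₁.2⟩
  have hKclosed : IsClosed K := by
    have hKeq : K = Icc e s₁ ∩ θ' ⁻¹' (Iic 0) := by
      ext t
      simp only [hK, Set.mem_setOf_eq, Set.mem_inter_iff, Set.mem_preimage, Set.mem_Iic]
    rw [hKeq]
    exact (hcontθ'.mono hIccsub).preimage_isClosed_of_isClosed isClosed_Icc isClosed_Iic
  have hKcomp : IsCompact K := isCompact_Icc.of_isClosed_subset hKclosed hKsub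
  have hKne : K.Nonempty := ⟨s₁, ⟨⟨hes₁.le, le_refl _⟩, hθ's₁⟩⟩
  set s₀ : ℝ := sInf K with hs₀def
  have hs₀K : s₀ ∈ K := hKcomp.sInf_mem hKne
  have hs₀mem : s₀ ∈ Ioo 0 S := hIccsub hs₀K.1
  have hs₀pos : 0 < s₀ := hs₀mem.1
  have hbefore : ∀ t, 0 < t → t < s₀ → 0 < θ' t := by
    intro t ht hts₀
    by_contra hle
    push_neg at hle
    rcases le_or_gt t e with h | h
    · exact absurd (hsmall t ht h) (not_lt.mpr hle)
    · have htK : t ∈ K := ⟨⟨h.le, hts₀.le.trans hs₀K.1.2⟩, hle⟩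
      exact absurd (csInf_le hKcomp.bddBelow htK) (not_le.mpr hts₀)
  -- derivative of θ' at s₀
  have hxne : x s₀ ≠ 0 := (hxpos s₀ hs₀mem).ne'
  have hd2 : HasDerivAt (fun s => deriv φ (z s))
      (deriv (deriv φ) (z s₀) * Real.sin (θ s₀)) s₀ := by
    have h1 : HasDerivAt (deriv φ) (deriv (deriv φ) (z s₀)) (z s₀) :=
      ((hφ'cd.differentiable (by simp)) (z s₀)).hasDerivAt
    exact h1.comp s₀ (hz s₀ hs₀mem)
  have hcosd : HasDerivAt (fun s => Real.cos (θ s)) (-Real.sin (θ s₀) * θ' s₀) s₀ :=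
    (hθ s₀ hs₀mem).cos
  have hsind : HasDerivAt (fun s => Real.sin (θ s)) (Real.cos (θ s₀) * θ' s₀) s₀ :=
    (hθ s₀ hs₀mem).sin
  have hdiv : HasDerivAt (fun s => Real.sin (θ s) / x s)
      ((Real.cos (θ s₀) * θ' s₀ * x s₀ - Real.sin (θ s₀) * Real.cos (θ s₀)) / x s₀ ^ 2) s₀ :=
    hsind.div (hx s₀ hs₀mem) hxne
  have hg : HasDerivAt (fun s => deriv φ (z s) * Real.cos (θ s) - Real.sin (θ s) / x s)
      (deriv (deriv φ) (z s₀) * Real.sin (θ s₀) * Real.cos (θ s₀) +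
        deriv φ (z s₀) * (-Real.sin (θ s₀) * θ' s₀) -
        (Real.cos (θ s₀) * θ' s₀ * x s₀ - Real.sin (θ s₀) * Real.cos (θ s₀)) / x s₀ ^ 2) s₀ :=
    (hd2.mul hcosd).sub hdiv
  have heqf : θ' =ᶠ[nhds s₀] (fun s => deriv φ (z s) * Real.cos (θ s) - Real.sin (θ s) / x s) :=
    Filter.eventuallyEq_of_mem (isOpen_Ioo.mem_nhds hs₀mem) (fun t ht => hθ'eq t ht)
  have hθ'D : HasDerivAt θ'
      (deriv (deriv φ) (z s₀) * Real.sin (θ s₀) * Real.cos (θ s₀) +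
        deriv φ (z s₀) * (-Real.sin (θ s₀) * θ' s₀) -
        (Real.cos (θ s₀) * θ' s₀ * x s₀ - Real.sin (θ s₀) * Real.cos (θ s₀)) / x s₀ ^ 2) s₀ :=
    hg.congr_of_eventuallyEq heqf
  -- θ'(s₀) = 0
  have hIoo_mem : Ioo (0:ℝ) s₀ ∈ 𝓝[<] s₀ := Ioo_mem_nhdsLT_of_mem ⟨hs₀pos, le_refl _⟩
  have hθ's₀0 : θ' s₀ = 0 := by
    refine le_antisymm hs₀K.2 ?_
    have htd : Tendsto θ' (𝓝[<] s₀) (nhds (θ' s₀)) :=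
      hθ'D.continuousAt.continuousWithinAt.tendsto
    exact ge_of_tendsto htd
      (Filter.eventually_of_mem hIoo_mem (fun t ht => (hbefore t ht.1 ht.2).le))
  -- θ strictly monotone up to s₀
  have hθmono : ∀ t₁ t₂, 0 < t₁ → t₁ < t₂ → t₂ ≤ s₀ → θ t₁ < θ t₂ := by
    intro t₁ t₂ ht₁ ht₁₂ ht₂
    have hsub : Icc t₁ t₂ ⊆ Ioo 0 S := fun u hu =>
      ⟨lt_of_lt_of_le ht₁ hu.1, lt_of_le_of_lt (hu.2.trans ht₂) hs₀mem.2⟩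
    have hcont : ContinuousOn θ (Icc t₁ t₂) := fun u hu =>
      (hθ u (hsub hu)).continuousAt.continuousWithinAt
    have hmono : StrictMonoOn θ (Icc t₁ t₂) := by
      apply strictMonoOn_of_deriv_pos (convex_Icc t₁ t₂) hcont
      intro u hu
      rw [interior_Icc] at hu
      have humem : u ∈ Ioo 0 S := hsub ⟨hu.1.le, hu.2.le⟩
      rw [(hθ u humem).deriv]
      exact hbefore u (lt_trans ht₁ hu.1) (lt_of_lt_of_le hu.2 ht₂)
    exact hmono ⟨le_refl _, ht₁₂.le⟩ ⟨ht₁₂.le, le_refl _⟩ ht₁₂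
  -- θ s₀ > 0
  have hθs₀pos : 0 < θ s₀ := by
    have h1 : θ (s₀ / 2) < θ s₀ := hθmono (s₀ / 2) s₀ (by linarith) (by linarith) (le_refl _)
    have h2 : 0 ≤ θ (s₀ / 2) := by
      have hmem2 : Ioo (0:ℝ) (s₀ / 2) ∈ 𝓝[>] (0:ℝ) :=
        Ioo_mem_nhdsGT_of_mem ⟨le_refl _, by linarith⟩
      refine le_of_tendsto hθ0 (Filter.eventually_of_mem hmem2 (fun t ht => ?_))
      exact (hθmono t (s₀ / 2) ht.1 ht.2 (by linarith)).le
    linarith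
  -- θ s₀ < π/2
  have hθs₀lt : θ s₀ < π / 2 := by
    by_contra hge
    push_neg at hge
    have hev2 : ∀ᶠ t in 𝓝[>] (0:ℝ), θ t < π / 2 ∧ t ∈ Ioo 0 s₀ := by
      refine ((hθ0.eventually (eventually_lt_nhds pi_div_two_pos)).and ?_)
      exact Filter.eventually_of_mem (Ioo_mem_nhdsGT_of_mem ⟨le_refl _, hs₀pos⟩) (fun t ht => ht)
    obtain ⟨δ, hδπ, hδmem⟩ := hev2.exists
    have hcont : ContinuousOn θ (Icc δ s₀) := by
      intro u hu
      have : u ∈ Ioo 0 S := ⟨lt_of_lt_of_le hδmem.1 hu.1, lt_of_le_of_lt hu.2 hs₀mem.2⟩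
      exact (hθ u this).continuousAt.continuousWithinAt
    have hivt := intermediate_value_Icc hδmem.2.le hcont
    obtain ⟨s₂, hs₂mem, hs₂eq⟩ := hivt ⟨hδπ.le, hge⟩
    have hs₂Ioo : s₂ ∈ Ioo 0 S :=
      ⟨lt_of_lt_of_le hδmem.1 hs₂mem.1, lt_of_le_of_lt hs₂mem.2 hs₀mem.2⟩
    have hθ's₂nonneg : 0 ≤ θ' s₂ := by
      rcases lt_or_eq_of_le hs₂mem.2 with h | h
      · exact (hbefore s₂ hs₂Ioo.1 h).le
      · rw [h, hθ's₀0]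
    have hneg : θ' s₂ < 0 := by
      rw [hθ'eq s₂ hs₂Ioo, hs₂eq, Real.cos_pi_div_two, Real.sin_pi_div_two]
      simp only [mul_zero, zero_sub]
      have := one_div_pos.mpr (hxpos s₂ hs₂Ioo)
      linarith
    linarith
  -- sin, cos positive at s₀
  have hsinpos : 0 < Real.sin (θ s₀) := Real.sin_pos_of_pos_of_lt_pi hθs₀pos
    (lt_trans hθs₀lt (by linarith [Real.pi_pos]))
  have hcospos : 0 < Real.cos (θ s₀) :=
    Real.cos_pos_of_mem_Ioo ⟨by linarith [Real.pi_pos], hθs₀lt⟩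
  -- D ≤ 0 from slope
  set D : ℝ := deriv (deriv φ) (z s₀) * Real.sin (θ s₀) * Real.cos (θ s₀) +
        deriv φ (z s₀) * (-Real.sin (θ s₀) * θ' s₀) -
        (Real.cos (θ s₀) * θ' s₀ * x s₀ - Real.sin (θ s₀) * Real.cos (θ s₀)) / x s₀ ^ 2 with hD
  have hslope : Tendsto (slope θ' s₀) (𝓝[<] s₀) (nhds D) :=
    (hasDerivAt_iff_tendsto_slope.mp hθ'D).mono_left
      (nhdsWithin_mono s₀ (fun u hu => ne_of_lt hu))
  have hDle : D ≤ 0 := by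
    refine le_of_tendsto hslope (Filter.eventually_of_mem hIoo_mem (fun t ht => ?_))
    rw [slope_def_field, hθ's₀0, sub_zero]
    exact div_nonpos_of_nonneg_of_nonpos (hbefore t ht.1 ht.2).le (by linarith [ht.2])
  have hDpos : 0 < D := by
    rw [hD, hθ's₀0]
    have h1 : 0 < Real.sin (θ s₀) * Real.cos (θ s₀) := mul_pos hsinpos hcospos
    have h2 : 0 ≤ deriv (deriv φ) (z s₀) := hφ'' (z s₀) (hzmem s₀ hs₀mem)
    have h3 : 0 < x s₀ ^ 2 := pow_pos (hxpos s₀ hs₀mem) 2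
    have h4 : 0 ≤ deriv (deriv φ) (z s₀) * Real.sin (θ s₀) * Real.cos (θ s₀) := by
      rw [mul_assoc]; exact mul_nonneg h2 h1.le
    have h5 : 0 < Real.sin (θ s₀) * Real.cos (θ s₀) / x s₀ ^ 2 := div_pos h1 h3
    have h6 : (Real.cos (θ s₀) * 0 * x s₀ - Real.sin (θ s₀) * Real.cos (θ s₀)) / x s₀ ^ 2 =
        -(Real.sin (θ s₀) * Real.cos (θ s₀) / x s₀ ^ 2) := by ring
    rw [h6]
    simp only [mul_zero, mul_neg, neg_zero, add_zero, sub_neg_eq_add]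
    linarith
  linarith
end

section
/- Let u: Ω → ℝ be a C² solution on Ω ⊆ ℝ² of the [φ,e₃]-minimal equation (1+u_x²)u_{yy} + (1+u_y²)u_{xx} − 2u_xu_yu_{xy} = φ'(u)W², W = √(1+u_x²+u_y²), and let ϕ be a C³ convex potential with Hessian ϕ_{xx} = e^{φ(u)}(1+u_x²)/W, ϕ_{xy} = e^{φ(u)} u_x u_y/W, ϕ_{yy} = e^{φ(u)}(1+u_y²)/W. Let ϑ be a primitive of e^{φ} (ϑ' = e^{φ}). Then the map ψ̃(x,y) = (ϕ_x(x,y), ϕ_y(x,y), ϑ(u(x,y))) has Jacobian with positive determinant wherever W is finite, and the pullback under ψ̃ of the Lorentz quadratic form dx̃² + dỹ² − dz̃² equals e^{2φ(u)}/W² times the quadratic form induced by the Euclidean graph metric (1+u_x²)dx² + 2u_xu_y dxdy + (1+u_y²)dy²; in particular the image is a spacelike graph in Minkowski space 𝕃³. -/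
/-!
The Hessian of the potential is `H = (e^{φ(u)}/W) (I + ∇u ∇uᵀ)`, and `I + ∇u ∇uᵀ` has
eigenvalues `1` (on `∇u^⊥`) and `W²` (on `∇u`). Hence `det H = e^{2φ(u)} > 0` and
`H² − e^{2φ(u)} ∇u ∇uᵀ = (e^{2φ(u)}/W²)(I + ∇u ∇uᵀ)`, which is exactly the pullback of the Lorentz
form along `ψ̃ = (ϕ_x, ϕ_y, ϑ ∘ u)`, since `dψ̃ = (H, e^{φ(u)} ∇uᵀ)`. The graph metric
`I + ∇u ∇uᵀ` is positive definite, so the image is spacelike.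
-/

open Real Set

def graphMetric {R : Type*} [CommRing R] (a b ξ η : R) : R :=
  (1 + a ^ 2) * ξ ^ 2 + 2 * a * b * ξ * η + (1 + b ^ 2) * η ^ 2

theorem graphMetric_eq_add_sq {R : Type*} [CommRing R] (a b ξ η : R) :
    graphMetric a b ξ η = ξ ^ 2 + η ^ 2 + (a * ξ + b * η) ^ 2 := by
  unfold graphMetric; ring

theorem graphMetric_pos {R : Type*} [CommRing R] [LinearOrder R] [IsStrictOrderedRing R]
    (a b : R) {ξ η : R} (h : ¬(ξ = 0 ∧ η = 0)) : 0 < graphMetric a b ξ η := by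
  rw [graphMetric_eq_add_sq]
  have hξη : 0 < ξ ^ 2 + η ^ 2 := by
    rcases not_and_or.mp h with hξ | hη <;> positivity
  positivity

section HessianOfGraph

variable {K : Type*} [Field K] {a b W : K}

theorem det_hessian_of_graph (hW : W ^ 2 = 1 + a ^ 2 + b ^ 2) (hW0 : W ≠ 0) (k : K) :
    k * (1 + a ^ 2) / W * (k * (1 + b ^ 2) / W) - (k * (a * b) / W) ^ 2 = k ^ 2 := by
  field_simp
  linear_combination (-k ^ 2) * hW

theorem pullback_lorentz_of_hessian_of_graph (hW : W ^ 2 = 1 + a ^ 2 + b ^ 2) (hW0 : W ≠ 0)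
    (k ξ η : K) :
    (k * (1 + a ^ 2) / W * ξ + k * (a * b) / W * η) ^ 2
        + (k * (a * b) / W * ξ + k * (1 + b ^ 2) / W * η) ^ 2 - (k * (a * ξ + b * η)) ^ 2
      = k ^ 2 / W ^ 2 * graphMetric a b ξ η := by
  unfold graphMetric
  field_simp
  linear_combination (-k ^ 2 * (a * ξ + b * η) ^ 2) * hW

end HessianOfGraph

theorem stmt12_general (Ω : Set (ℝ × ℝ))
    (φ : ℝ → ℝ)
    (u ux uy ϕxx ϕxy ϕyy W : ℝ × ℝ → ℝ)
    (hW : ∀ p, W p = Real.sqrt (1 + (ux p) ^ 2 + (uy p) ^ 2))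
    (hHxx : ∀ p ∈ Ω, ϕxx p = Real.exp (φ (u p)) * (1 + (ux p) ^ 2) / W p)
    (hHxy : ∀ p ∈ Ω, ϕxy p = Real.exp (φ (u p)) * (ux p * uy p) / W p)
    (hHyy : ∀ p ∈ Ω, ϕyy p = Real.exp (φ (u p)) * (1 + (uy p) ^ 2) / W p) :
    ∀ p ∈ Ω,
      0 < ϕxx p * ϕyy p - ϕxy p ^ 2 ∧
      (∀ ξ η : ℝ,
        (ϕxx p * ξ + ϕxy p * η) ^ 2 + (ϕxy p * ξ + ϕyy p * η) ^ 2
            - (Real.exp (φ (u p)) * (ux p * ξ + uy p * η)) ^ 2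
          = Real.exp (2 * φ (u p)) / (W p) ^ 2 *
              ((1 + (ux p) ^ 2) * ξ ^ 2 + 2 * ux p * uy p * ξ * η
                + (1 + (uy p) ^ 2) * η ^ 2)) ∧
      (∀ ξ η : ℝ, ¬(ξ = 0 ∧ η = 0) →
        0 < (ϕxx p * ξ + ϕxy p * η) ^ 2 + (ϕxy p * ξ + ϕyy p * η) ^ 2
            - (Real.exp (φ (u p)) * (ux p * ξ + uy p * η)) ^ 2) := by
  intro p hp
  have hW0 : W p ≠ 0 := by
    rw [hW]; exact (Real.sqrt_pos.mpr (by positivity)).ne'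
  have hW2 : W p ^ 2 = 1 + ux p ^ 2 + uy p ^ 2 := by
    rw [hW]; exact Real.sq_sqrt (by positivity)
  have hexp : Real.exp (2 * φ (u p)) = Real.exp (φ (u p)) ^ 2 := by
    rw [two_mul, Real.exp_add, sq]
  have pullback := pullback_lorentz_of_hessian_of_graph hW2 hW0 (Real.exp (φ (u p)))
  rw [hHxx p hp, hHxy p hp, hHyy p hp, hexp]
  refine ⟨?_, pullback, fun ξ η hξη => ?_⟩
  · rw [det_hessian_of_graph hW2 hW0]; positivity
  · rw [pullback]; exact mul_pos (by positivity) (graphMetric_pos _ _ hξη)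

/-- Conformality in the Calabi-type correspondence: for a `[φ,e₃]`-minimal
graph `u` with convex potential `ϕ` (Hessian `e^{φ(u)}/W · (I + ∇u ⊗ ∇u)`) and `ϑ` a
primitive of `e^{φ}`, the map `ψ̃ = (ϕ_x, ϕ_y, ϑ(u))` has Jacobian with positive
determinant, and the pullback of the Lorentz form `dx̃² + dỹ² − dz̃²` equals
`e^{2φ(u)}/W²` times the Euclidean graph metric `(1+u_x²)dx² + 2u_xu_y dxdy + (1+u_y²)dy²`;
in particular the image is a spacelike graph in `𝕃³`. -/
theorem stmt12 (Ω : Set (ℝ × ℝ)) (hΩ : IsOpen Ω)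
    (φ ϑ : ℝ → ℝ) (hϑ : ∀ t, HasDerivAt ϑ (Real.exp (φ t)) t)
    (u ux uy ϕ ϕx ϕy ϕxx ϕxy ϕyy W : ℝ × ℝ → ℝ)
    (hW : ∀ p, W p = Real.sqrt (1 + (ux p) ^ 2 + (uy p) ^ 2))
    (hux : ∀ p ∈ Ω, HasDerivAt (fun x => u (x, p.2)) (ux p) p.1)
    (huy : ∀ p ∈ Ω, HasDerivAt (fun y => u (p.1, y)) (uy p) p.2)
    (hϕx : ∀ p ∈ Ω, HasDerivAt (fun x => ϕ (x, p.2)) (ϕx p) p.1)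
    (hϕy : ∀ p ∈ Ω, HasDerivAt (fun y => ϕ (p.1, y)) (ϕy p) p.2)
    (hϕxx : ∀ p ∈ Ω, HasDerivAt (fun x => ϕx (x, p.2)) (ϕxx p) p.1)
    (hϕxy : ∀ p ∈ Ω, HasDerivAt (fun y => ϕx (p.1, y)) (ϕxy p) p.2)
    (hϕyy : ∀ p ∈ Ω, HasDerivAt (fun y => ϕy (p.1, y)) (ϕyy p) p.2)
    (hHxx : ∀ p ∈ Ω, ϕxx p = Real.exp (φ (u p)) * (1 + (ux p) ^ 2) / W p)
    (hHxy : ∀ p ∈ Ω, ϕxy p = Real.exp (φ (u p)) * (ux p * uy p) / W p)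
    (hHyy : ∀ p ∈ Ω, ϕyy p = Real.exp (φ (u p)) * (1 + (uy p) ^ 2) / W p) :
    ∀ p ∈ Ω,
      0 < ϕxx p * ϕyy p - ϕxy p ^ 2 ∧
      (∀ ξ η : ℝ,
        (ϕxx p * ξ + ϕxy p * η) ^ 2 + (ϕxy p * ξ + ϕyy p * η) ^ 2
            - (Real.exp (φ (u p)) * (ux p * ξ + uy p * η)) ^ 2
          = Real.exp (2 * φ (u p)) / (W p) ^ 2 *
              ((1 + (ux p) ^ 2) * ξ ^ 2 + 2 * ux p * uy p * ξ * η
                + (1 + (uy p) ^ 2) * η ^ 2)) ∧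
      (∀ ξ η : ℝ, ¬(ξ = 0 ∧ η = 0) →
        0 < (ϕxx p * ξ + ϕxy p * η) ^ 2 + (ϕxy p * ξ + ϕyy p * η) ^ 2
            - (Real.exp (φ (u p)) * (ux p * ξ + uy p * η)) ^ 2) :=
  stmt12_general Ω φ u ux uy ϕxx ϕxy ϕyy W hW hHxx hHxy hHyy
end
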